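/- Let X be a Banach lattice. If X has the Bishop–Phelps–Bollobás property for positive functionals, then X is weakly monotone. -/

import Mathlib

/-!
Hahn–Banach applied to the sublinear functional `z ↦ ‖z⁺‖` gives, for `x⁺ ≠ 0`, a positive
norm-one functional `f` with `f x = ‖x⁺‖`. If `‖x‖ ≤ 1` and `‖x⁺‖ > 1 - η`, then `f` almost
attains its norm at `x / ‖x‖`, which lies within `η` of `x`. The Bishop–Phelps–Bollobás property
yields a unit vector `y` near `x / ‖x‖` and a positive norm-one `g` with `g y = 1`; since
`1 = g y ≤ g y⁺ ≤ ‖y⁺‖ ≤ ‖y‖ = 1`, this `y` has `‖y⁺‖ = 1`.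
-/

/-- The *Bishop–Phelps–Bollobás property for positive functionals* of a Banach lattice. -/
def BPBppPositive (X : Type*) [NormedAddCommGroup X] [Lattice X] [IsOrderedAddMonoid X] [HasSolidNorm X] [NormedSpace ℝ X] : Prop :=
  ∀ ε : ℝ, 0 < ε → ε < 1 → ∃ η : ℝ, 0 < η ∧ η < ε ∧
    ∀ f : X →L[ℝ] ℝ, (∀ z : X, 0 ≤ z → 0 ≤ f z) → ‖f‖ = 1 →
      ∀ x₀ : X, ‖x₀‖ = 1 → 1 - η < f x₀ →
        ∃ (y : X) (g : X →L[ℝ] ℝ), ‖y‖ = 1 ∧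
          (∀ z : X, 0 ≤ z → 0 ≤ g z) ∧ ‖g‖ = 1 ∧
          g y = 1 ∧ ‖y - x₀‖ < ε ∧ ‖g - f‖ < ε

/-- A Banach lattice is *weakly monotone* (WM) if for every `0 < ε < 1` there is `0 < δ < ε`
such that whenever `‖x‖ ≤ 1` and `‖x⁺‖ > 1 - δ`, there exists `y` with `‖y‖ = 1`,
`‖y⁺‖ = 1` and `‖y - x‖ < ε`. -/
def WeaklyMonotoneLattice (X : Type*) [NormedAddCommGroup X] [Lattice X] [IsOrderedAddMonoid X] [HasSolidNorm X] : Prop :=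
  ∀ ε : ℝ, 0 < ε → ε < 1 → ∃ δ : ℝ, 0 < δ ∧ δ < ε ∧
    ∀ x : X, ‖x‖ ≤ 1 → 1 - δ < ‖x ⊔ 0‖ →
      ∃ y : X, ‖y‖ = 1 ∧ ‖y ⊔ 0‖ = 1 ∧ ‖y - x‖ < ε

theorem NormedSpace.norm_normalize_sub_self {V : Type*} [NormedAddCommGroup V] [NormedSpace ℝ V]
    {x : V} (hx : x ≠ 0) : ‖NormedSpace.normalize x - x‖ = |1 - ‖x‖| :=
  calc ‖NormedSpace.normalize x - x‖ = ‖(‖x‖⁻¹ - 1) • x‖ := by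
        rw [NormedSpace.normalize, sub_smul, one_smul]
    _ = |(‖x‖⁻¹ - 1) * ‖x‖| := by rw [norm_smul, Real.norm_eq_abs, abs_mul, abs_norm]
    _ = |1 - ‖x‖| := by rw [sub_mul, inv_mul_cancel₀ (norm_ne_zero_iff.mpr hx), one_mul]

theorem exists_linearMap_apply_eq_of_sublinear {E : Type*} [AddCommGroup E] [Module ℝ E]
    (N : E → ℝ) (N_hom : ∀ c : ℝ, 0 < c → ∀ x, N (c • x) = c * N x)
    (N_add : ∀ x y, N (x + y) ≤ N x + N y) (x : E) :
    ∃ g : E →ₗ[ℝ] ℝ, g x = N x ∧ ∀ z, g z ≤ N z := by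
  have N_zero : N 0 = 0 := by
    have := N_hom 2 two_pos 0
    rw [smul_zero] at this
    linarith
  have le_smul (c : ℝ) : c * N x ≤ N (c • x) := by
    rcases lt_or_ge 0 c with hc | hc
    · exact (N_hom c hc x).ge
    · have := N_add (c • x) ((-c) • x)
      rw [← add_smul, add_neg_cancel, zero_smul, N_zero] at this
      rcases hc.lt_or_eq with hc | rfl
      · rw [N_hom (-c) (neg_pos.mpr hc)] at this
        linarith
      · simp [N_zero]
  have H (c : ℝ) (hc : c • x = 0) : c • N x = 0 := by
    rcases smul_eq_zero.mp hc with rfl | rfl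
    · exact zero_smul ℝ _
    · rw [N_zero, smul_zero]
  set f : E →ₗ.[ℝ] ℝ := LinearPMap.mkSpanSingleton' x (N x) H
  have hf : ∀ y : f.domain, f y ≤ N y := by
    rintro ⟨y, hy⟩
    obtain ⟨c, rfl⟩ := Submodule.mem_span_singleton.mp hy
    rw [LinearPMap.mkSpanSingleton'_apply, smul_eq_mul]
    exact le_smul c
  obtain ⟨g, hgf, hgN⟩ := exists_extension_of_le_sublinear f N N_hom N_add hf
  have hx : x ∈ f.domain := Submodule.mem_span_singleton_self x
  exact ⟨g, (hgf ⟨x, hx⟩).trans (LinearPMap.mkSpanSingleton'_apply_self x (N x) H hx), hgN⟩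

theorem posPart_smul_of_pos {𝕜 X : Type*} [Field 𝕜] [LinearOrder 𝕜] [IsStrictOrderedRing 𝕜]
    [AddCommGroup X] [Lattice X] [Module 𝕜 X] [PosSMulMono 𝕜 X] {c : 𝕜} (hc : 0 < c)
    (a : X) : (c • a)⁺ = c • a⁺ := by
  have := (OrderIso.smulRight hc).map_sup a 0
  simp only [OrderIso.smulRight_apply, smul_zero] at this
  rw [posPart_def, posPart_def, this]

theorem norm_posPart_smul_of_pos {X : Type*} [NormedAddCommGroup X] [Lattice X]
    [NormedSpace ℝ X] [PosSMulMono ℝ X] {c : ℝ} (hc : 0 < c) (a : X) : ‖(c • a)⁺‖ = c * ‖a⁺‖ := by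
  rw [posPart_smul_of_pos hc, norm_smul, Real.norm_of_nonneg hc.le]

section BanachLattice

variable {X : Type*} [NormedAddCommGroup X] [Lattice X] [IsOrderedAddMonoid X]

theorem posPart_add_le (a b : X) : (a + b)⁺ ≤ a⁺ + b⁺ :=
  sup_le (add_le_add (le_posPart a) (le_posPart b))
    (add_nonneg (posPart_nonneg a) (posPart_nonneg b))

theorem apply_le_apply_posPart {F : Type*} [FunLike F X ℝ] [AddMonoidHomClass F X ℝ] {g : F}
    (hg : ∀ z, 0 ≤ z → 0 ≤ g z) (y : X) : g y ≤ g y⁺ :=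
  sub_nonneg.mp <| map_sub g y⁺ y ▸ hg _ (sub_nonneg.mpr (le_posPart y))

theorem ContinuousLinearMap.apply_le_norm_posPart [NormedSpace ℝ X] {g : X →L[ℝ] ℝ}
    (hg : ∀ z, 0 ≤ z → 0 ≤ g z) (hg_norm : ‖g‖ ≤ 1) (y : X) : g y ≤ ‖y⁺‖ :=
  calc g y ≤ g y⁺ := apply_le_apply_posPart hg y
    _ ≤ ‖g‖ * ‖y⁺‖ := (le_abs_self _).trans (g.le_opNorm _)
    _ ≤ ‖y⁺‖ := mul_le_of_le_one_left (norm_nonneg _) hg_norm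

variable [HasSolidNorm X]

theorem norm_le_norm_of_nonneg_of_le {a b : X} (ha : 0 ≤ a) (hab : a ≤ b) : ‖a‖ ≤ ‖b‖ :=
  norm_le_norm_of_abs_le_abs <| by rwa [abs_of_nonneg ha, abs_of_nonneg (ha.trans hab)]

theorem norm_posPart_le (a : X) : ‖a⁺‖ ≤ ‖a‖ :=
  norm_le_norm_of_abs_le_abs <| by
    rw [abs_of_nonneg (posPart_nonneg a)]
    exact sup_le (le_abs_self a) (abs_nonneg a)

theorem norm_posPart_add_le (a b : X) : ‖(a + b)⁺‖ ≤ ‖a⁺‖ + ‖b⁺‖ :=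
  (norm_le_norm_of_nonneg_of_le (posPart_nonneg _) (posPart_add_le a b)).trans
    (norm_add_le _ _)

variable [NormedSpace ℝ X] [PosSMulMono ℝ X]

theorem exists_positive_dual_apply_eq_norm_posPart {x : X} (hx : x⁺ ≠ 0) :
    ∃ f : X →L[ℝ] ℝ, (∀ z, 0 ≤ z → 0 ≤ f z) ∧ ‖f‖ = 1 ∧ f x = ‖x⁺‖ := by
  obtain ⟨g, hgx, hg⟩ := exists_linearMap_apply_eq_of_sublinear (fun z : X => ‖z⁺‖)
    (fun _ hc z => norm_posPart_smul_of_pos hc z) norm_posPart_add_le x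
  have g_nonneg (z : X) (hz : 0 ≤ z) : 0 ≤ g z := by
    simpa [posPart_eq_zero.mpr (neg_nonpos.mpr hz)] using hg (-z)
  have g_bound (z : X) : ‖g z‖ ≤ 1 * ‖z‖ := by
    rw [one_mul, Real.norm_eq_abs, abs_le]
    constructor
    · have := (hg (-z)).trans (norm_posPart_le (-z))
      rw [map_neg, norm_neg] at this
      linarith
    · exact (hg z).trans (norm_posPart_le z)
  set f := g.mkContinuous 1 g_bound
  have hfx : f x = ‖x⁺‖ := hgx
  have f_norm_ge : 1 ≤ ‖f‖ := by
    refine le_of_mul_le_mul_right ?_ (norm_pos_iff.mpr hx)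
    calc 1 * ‖x⁺‖ = f x := by rw [one_mul, hfx]
      _ ≤ f x⁺ := apply_le_apply_posPart (g := f) g_nonneg x
      _ ≤ ‖f‖ * ‖x⁺‖ := (le_abs_self _).trans (f.le_opNorm _)
  exact ⟨f, g_nonneg, (g.mkContinuous_norm_le zero_le_one g_bound).antisymm f_norm_ge, hfx⟩

end BanachLattice

theorem stmt7_general (X : Type*) [NormedAddCommGroup X] [Lattice X] [IsOrderedAddMonoid X] [HasSolidNorm X] [NormedSpace ℝ X]
    [PosSMulStrictMono ℝ X] (h : BPBppPositive X) :
    WeaklyMonotoneLattice X := by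
  intro ε hε hε1
  obtain ⟨η, hη, hηε, hBPB⟩ := h (ε / 2) (by linarith) (by linarith)
  refine ⟨η, hη, by linarith, fun x hx1 hx2 => ?_⟩
  simp only [← posPart_def] at hx2 ⊢
  have hxp : x⁺ ≠ 0 := norm_pos_iff.mp (by linarith)
  have hx : x ≠ 0 := fun hx => hxp (by simp [hx])
  set x₀ := NormedSpace.normalize x with hx₀
  obtain ⟨f, hf_pos, hf_norm, hfx⟩ := exists_positive_dual_apply_eq_norm_posPart hxp
  have hfx₀ : 1 - η < f x₀ :=
    calc 1 - η < ‖x⁺‖ := hx2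
      _ ≤ ‖x‖⁻¹ * ‖x⁺‖ :=
        le_mul_of_one_le_left (norm_nonneg _) ((one_le_inv₀ (norm_pos_iff.mpr hx)).mpr hx1)
      _ = f x₀ := by rw [hx₀, NormedSpace.normalize, map_smul, hfx, smul_eq_mul]
  obtain ⟨y, g, hy, hg_pos, hg_norm, hgy, hyx, -⟩ :=
    hBPB f hf_pos hf_norm x₀ (NormedSpace.norm_normalize hx) hfx₀
  refine ⟨y, hy, (hy ▸ norm_posPart_le y).antisymm
    (hgy ▸ g.apply_le_norm_posPart hg_pos hg_norm.le y), ?_⟩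
  have hx₀x : ‖x₀ - x‖ < ε / 2 := by
    rw [NormedSpace.norm_normalize_sub_self hx, abs_of_nonneg (by linarith)]
    linarith [norm_posPart_le x]
  calc ‖y - x‖ ≤ ‖y - x₀‖ + ‖x₀ - x‖ := norm_sub_le_norm_sub_add_norm_sub _ _ _
    _ < ε / 2 + ε / 2 := add_lt_add hyx hx₀x
    _ = ε := add_halves ε

/-- A Banach lattice with the Bishop–Phelps–Bollobás property for positive
functionals is weakly monotone. -/
theorem stmt7 (X : Type*) [NormedAddCommGroup X] [Lattice X] [IsOrderedAddMonoid X] [HasSolidNorm X] [NormedSpace ℝ X]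
    [PosSMulStrictMono ℝ X] [PosSMulReflectLT ℝ X] [CompleteSpace X] (h : BPBppPositive X) :
    WeaklyMonotoneLattice X :=
  stmt7_general X h
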